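/- Assume r = dim g(−1)₁̄ is odd. For x ∈ ⊕_{i≥−1} g(i), one has χ([n⁰, x]) = 0 if and only if x ∈ g^e ⊕ ℂ v_{(r+1)/2}. -/

import Mathlib

/-!
STATEMENT 7 (Lemma `chisir` of the paper).

`g = g₀̄ ⊕ g₁̄` is a basic classical Lie superalgebra over `ℂ` (encoded below by a
ℤ₂-graded vector space `g` with decomposition `g0, g1`, a super Lie bracket `bk`,
and an even non-degenerate supersymmetric invariant bilinear form `B`).
`e ∈ g₀̄` is nilpotent, part of an `sl(2)`-triple `(e, H, f)` with `B e f = 1`,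
`χ x = B e x`, and `gr` is the `ad H`-grading of `g`.
`s = dim g(−1)₀̄`, `r = dim g(−1)₁̄` with `r` odd; `u`, `v` are the fixed bases of
`g(−1)₀̄`, `g(−1)₁̄` with the prescribed `χ`-pairings (indices are 0-based, so the
paper's `v_{(r+1)/2}` is `v mid` with `mid + 1 = (r+1)/2`).
`n0 = n⁰ = ⊕_{i ≤ −2} g(i) ⊕ 𝔩`, where `𝔩` is the span of all the `u i` and all the
`v i` with `i ≠ mid`.

Claim: for `x ∈ ⊕_{i ≥ −1} g(i)`, one has `χ([n⁰, x]) = 0` iff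
`x ∈ g^e ⊕ ℂ·v_{(r+1)/2}`, where `g^e = ker (ad e)`.
-/

noncomputable section

theorem stmt7_chi_bracket_vanishes_iff
    -- the underlying ℤ₂-graded vector space of g
    (g : Type) [AddCommGroup g] [Module ℂ g] [FiniteDimensional ℂ g]
    (g0 g1 : Submodule ℂ g) (hcompl : IsCompl g0 g1)
    -- the super Lie bracket
    (bk : g →ₗ[ℂ] g →ₗ[ℂ] g)
    (hbk00 : ∀ x ∈ g0, ∀ y ∈ g0, bk x y ∈ g0)
    (hbk01 : ∀ x ∈ g0, ∀ y ∈ g1, bk x y ∈ g1)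
    (hbk10 : ∀ x ∈ g1, ∀ y ∈ g0, bk x y ∈ g1)
    (hbk11 : ∀ x ∈ g1, ∀ y ∈ g1, bk x y ∈ g0)
    (hskew0 : ∀ x ∈ g0, ∀ y, bk x y = - bk y x)
    (hskew11 : ∀ x ∈ g1, ∀ y ∈ g1, bk x y = bk y x)
    (hjac0 : ∀ x ∈ g0, ∀ y z, bk x (bk y z) = bk (bk x y) z + bk y (bk x z))
    (hjac1 : ∀ x ∈ g1, ∀ y ∈ g1, ∀ z, bk x (bk y z) = bk (bk x y) z - bk y (bk x z))
    -- even non-degenerate supersymmetric invariant bilinear form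
    (B : g →ₗ[ℂ] g →ₗ[ℂ] ℂ)
    (hBsymm : ∀ x ∈ g0, ∀ y, B x y = B y x)
    (hBalt : ∀ x ∈ g1, ∀ y ∈ g1, B x y = - B y x)
    (hBeven : ∀ x ∈ g0, ∀ y ∈ g1, B x y = 0)
    (hBinv : ∀ x y z, B (bk x y) z = B x (bk y z))
    (hBnondeg : ∀ x, (∀ y, B x y = 0) → x = 0)
    -- the sl(2)-triple (e, H, f) with (e, f) = 1, and χ = (e, ·)
    (e H f : g) (he0 : e ∈ g0) (hH0 : H ∈ g0) (hf0 : f ∈ g0)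
    (hef : bk e f = H) (hHe : bk H e = (2 : ℂ) • e) (hHf : bk H f = (-2 : ℂ) • f)
    (hBef : B e f = 1)
    (χ : g →ₗ[ℂ] ℂ) (hχ : ∀ x, χ x = B e x)
    -- the ad H grading g = ⊕_i g(i)
    (gr : ℤ → Submodule ℂ g)
    (hgrint : DirectSum.IsInternal gr)
    (hgrad : ∀ i : ℤ, ∀ x ∈ gr i, bk H x = (i : ℂ) • x)
    (hgrsup : ∀ i : ℤ, gr i = gr i ⊓ g0 ⊔ gr i ⊓ g1)
    (he2 : e ∈ gr 2) (hf2 : f ∈ gr (-2))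
    -- s = dim g(−1)₀̄, r = dim g(−1)₁̄, r odd
    (s r : ℕ) (hs : Module.finrank ℂ ↥(gr (-1) ⊓ g0) = s)
    (hrdim : Module.finrank ℂ ↥(gr (-1) ⊓ g1) = r) (hrodd : Odd r)
    -- the bases u of g(−1)₀̄ and v of g(−1)₁̄ with the prescribed χ-pairings
    (u : Fin s → g) (v : Fin r → g)
    (hu : ∀ i, u i ∈ gr (-1) ⊓ g0) (hv : ∀ i, v i ∈ gr (-1) ⊓ g1)
    (hspan : gr (-1) = Submodule.span ℂ (Set.range u ∪ Set.range v))
    (hχu : ∀ i j : Fin s, χ (bk (u i) (u j)) =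
      if (i : ℕ) + (j : ℕ) + 2 = s + 1 then (if (i : ℕ) + 1 ≤ s / 2 then -1 else 1) else 0)
    (hχv : ∀ i j : Fin r, χ (bk (v i) (v j)) =
      if (i : ℕ) + (j : ℕ) + 2 = r + 1 then 1 else 0)
    -- the distinguished middle basis vector v_{(r+1)/2} (0-based index)
    (mid : Fin r) (hmid : (mid : ℕ) + 1 = (r + 1) / 2)
    -- the nilpotent subalgebra n⁰ = ⊕_{i ≤ −2} g(i) ⊕ 𝔩
    (n0 : Submodule ℂ g)
    (hn0 : n0 = (⨆ i : ℤ, ⨆ _ : i ≤ -2, gr i) ⊔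
      Submodule.span ℂ (Set.range u ∪ v '' {i : Fin r | i ≠ mid})) :
    -- the claim: for x ∈ ⊕_{i ≥ −1} g(i),
    --   χ([n⁰, x]) = 0  ↔  x ∈ g^e ⊕ ℂ v_{(r+1)/2}
    ∀ x ∈ (⨆ i : ℤ, ⨆ _ : (-1 : ℤ) ≤ i, gr i),
      ((∀ y ∈ n0, χ (bk y x) = 0) ↔ x ∈ LinearMap.ker (bk e) ⊔ (ℂ ∙ v mid)) := by
  classical
  -- ### basic consequences of the axioms
  have hbkyE : ∀ y : g, bk y e = - bk e y := fun y => by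
    rw [hskew0 e he0 y, neg_neg]
  have hχg1 : ∀ w ∈ g1, χ w = 0 := fun w hw => by
    rw [hχ]; exact hBeven e he0 w hw
  -- weight orthogonality of B on ad-H eigenvectors
  have hweight : ∀ (a b : g) (i j : ℂ), bk H a = i • a → bk H b = j • b →
      i + j ≠ 0 → B a b = 0 := by
    intro a b i j ha hb hij
    have haH : bk a H = -(i • a) := by rw [← ha, hskew0 H hH0 a, neg_neg]
    have h2 : B (bk a H) b = B a (bk H b) := hBinv a H b
    rw [haH, hb, map_neg, map_smul, LinearMap.neg_apply, LinearMap.smul_apply,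
      map_smul, smul_eq_mul, smul_eq_mul] at h2
    have h3 : (i + j) * B a b = 0 := by linear_combination -h2
    rcases mul_eq_zero.1 h3 with h | h
    · exact absurd h hij
    · exact h
  -- χ vanishes on ad-H eigenvectors of eigenvalue ≠ -2
  have hχeig : ∀ (z : g) (m : ℂ), bk H z = m • z → m ≠ -2 → χ z = 0 := by
    intro z m hz hm
    rw [hχ]
    refine hweight e z 2 m hHe hz ?_
    intro h; exact hm (by linear_combination h)
  -- brackets of eigenvectors are eigenvectors
  have heig : ∀ (a b : g) (i j : ℂ), bk H a = i • a → bk H b = j • b →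
      bk H (bk a b) = (i + j) • bk a b := by
    intro a b i j ha hb
    rw [hjac0 H hH0 a b, ha, hb, map_smul, map_smul, LinearMap.smul_apply, add_smul]
  -- invariance identities
  have hχbk : ∀ y z : g, χ (bk y z) = B (bk e y) z := fun y z => by
    rw [hχ, hBinv]
  have hBflip : ∀ y z : g, B y (bk e z) = - B (bk e y) z := fun y z => by
    rw [← hBinv y e z, hbkyE y, map_neg, LinearMap.neg_apply]
  -- parity decomposition
  have hsplit : ∀ w : g, ∃ w0 ∈ g0, ∃ w1 ∈ g1, w = w0 + w1 := by
    intro w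
    have hw : w ∈ g0 ⊔ g1 := by rw [hcompl.sup_eq_top]; trivial
    obtain ⟨w0, h0, w1, h1, h⟩ := Submodule.mem_sup.1 hw
    exact ⟨w0, h0, w1, h1, h.symm⟩
  -- right nondegeneracy
  have hBnd : ∀ w : g, (∀ z, B z w = 0) → w = 0 := by
    intro w hw
    obtain ⟨w0, h0, w1, h1, rfl⟩ := hsplit w
    have key : ∀ z, B (w0 - w1) z = 0 := by
      intro z
      obtain ⟨z0, hz0, z1, hz1, rfl⟩ := hsplit z
      have hwz := hw (z0 + z1)
      have s1 : B w0 z0 = B z0 w0 := hBsymm w0 h0 z0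
      have s2 : B w0 z1 = B z1 w0 := hBsymm w0 h0 z1
      have s3 : B w1 z0 = B z0 w1 := (hBsymm z0 hz0 w1).symm
      have s4 : B w1 z1 = - B z1 w1 := hBalt w1 h1 z1 hz1
      have s5 : B z0 w1 = 0 := hBeven z0 hz0 w1 h1
      simp only [map_add, map_sub, LinearMap.add_apply, LinearMap.sub_apply] at hwz ⊢
      linear_combination hwz + s1 + s2 - s3 - s4 - 2 * s5
    have hw01 : w0 - w1 = 0 := hBnondeg _ key
    have hww : w0 = w1 := by linear_combination (norm := module) hw01
    have : w0 ∈ g0 ⊓ g1 := ⟨h0, hww ▸ h1⟩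
    rw [hcompl.inf_eq_bot, Submodule.mem_bot] at this
    rw [this, ← hww, this, add_zero]
  -- perpendicularity of the centralizer of e
  have hker : ∀ k : g, bk e k = 0 → ∀ y, B (bk e y) k = 0 := by
    intro k hk y
    have hBke : ∀ z, B k (bk e z) = 0 := fun z => by
      rw [← hBinv k e z, hbkyE k, hk, neg_zero, map_zero, LinearMap.zero_apply]
    obtain ⟨y0, hy0, y1, hy1, rfl⟩ := hsplit y
    obtain ⟨k0, hk0, k1, hk1, hks⟩ := hsplit k
    have t0 : B (bk e y0) k = 0 := by
      rw [hBsymm (bk e y0) (hbk00 e he0 y0 hy0) k]; exact hBke y0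
    have t1 : B (bk e y1) k = 0 := by
      have hw1 : bk e y1 ∈ g1 := hbk01 e he0 y1 hy1
      have a1 : B (bk e y1) k0 = 0 := by
        rw [← hBsymm k0 hk0 (bk e y1)]; exact hBeven k0 hk0 _ hw1
      have a2 : B k1 (bk e y1) = 0 := by
        have h := hBke y1
        rw [hks, map_add, LinearMap.add_apply, hBeven k0 hk0 _ hw1, zero_add] at h
        exact h
      have a3 : B (bk e y1) k1 = 0 := by rw [hBalt _ hw1 k1 hk1, a2, neg_zero]
      rw [hks, map_add, a1, a3, add_zero]
    rw [map_add, map_add, LinearMap.add_apply, t0, t1, add_zero]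
  -- comparison of nat indices
  obtain ⟨t, ht⟩ := hrodd
  have hmidt : (mid : ℕ) = t := by have := mid.isLt; omega
  intro x hx
  constructor
  · -- forward direction
    intro hC
    obtain ⟨fc, hfc, hxsum⟩ := (Submodule.mem_iSup_iff_exists_finsupp _ x).1 hx
    have hfgr : ∀ i : ℤ, fc i ∈ gr i := by
      intro i
      by_cases h : (-1 : ℤ) ≤ i
      · have h' := hfc i; rwa [iSup_pos h] at h'
      · have h' := hfc i; rw [iSup_neg h, Submodule.mem_bot] at h'
        rw [h']; exact zero_mem _
    have hflow : ∀ i : ℤ, i < -1 → fc i = 0 := by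
      intro i h
      have h' := hfc i; rwa [iSup_neg (not_le.2 h), Submodule.mem_bot] at h'
    -- isolation of a single component
    have hiso : ∀ (yy : g) (i : ℤ), yy ∈ gr i →
        χ (bk yy x) = χ (bk yy (fc (-2 - i))) := by
      intro yy i hyy
      conv_lhs => rw [← hxsum]
      rw [Finsupp.sum, map_sum, map_sum]
      refine Finset.sum_eq_single (-2 - i) ?_ ?_
      · intro bb _ hne
        refine hχeig _ ((i : ℂ) + (bb : ℂ))
          (heig yy (fc bb) _ _ (hgrad i yy hyy) (hgrad bb _ (hfgr bb))) ?_
        have hne' : i + bb ≠ -2 := by omega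
        intro hh
        exact hne' (by exact_mod_cast (show ((i : ℂ) + (bb : ℂ)) = ((-2 : ℤ) : ℂ) by
          push_cast; linear_combination hh))
      · intro hns
        rw [Finsupp.notMem_support_iff.1 hns, map_zero, map_zero]
    -- nonnegative components are killed by e
    have hek : ∀ k : ℤ, 0 ≤ k → bk e (fc k) = 0 := by
      intro k hk
      refine hBnd _ ?_
      intro z
      have hztop : z ∈ ⨆ i, gr i := by rw [hgrint.submodule_iSup_eq_top]; trivial
      refine Submodule.iSup_induction (motive := fun w => B w (bk e (fc k)) = 0) gr hztop ?_ ?_ ?_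
      · intro i zz hzz
        rw [hBflip zz (fc k), ← hχbk zz (fc k), neg_eq_zero]
        by_cases hik : i + k = -2
        · have hi2 : i ≤ -2 := by omega
          have hzzn0 : zz ∈ n0 := by
            rw [hn0]
            exact Submodule.mem_sup_left
              (Submodule.mem_iSup_of_mem i (Submodule.mem_iSup_of_mem hi2 hzz))
          have h0 := hC zz hzzn0
          rw [hiso zz i hzz] at h0
          have hki : (-2 - i) = k := by omega
          rwa [hki] at h0
        · refine hχeig _ ((i : ℂ) + (k : ℂ))
            (heig zz (fc k) _ _ (hgrad i zz hzz) (hgrad k _ (hfgr k))) ?_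
          intro hh
          exact hik (by exact_mod_cast (show ((i : ℂ) + (k : ℂ)) = ((-2 : ℤ) : ℂ) by
            push_cast; linear_combination hh))
      · simp
      · intro a b ha hb
        rw [map_add, LinearMap.add_apply, ha, hb, add_zero]
    -- analysis of the (-1) component
    have hxm1 : fc (-1) ∈ gr (-1) := hfgr (-1)
    have hxmspan : fc (-1) ∈ Submodule.span ℂ (Set.range u) ⊔ Submodule.span ℂ (Set.range v) := by
      rw [← Submodule.span_union, ← hspan]; exact hxm1
    obtain ⟨p, hp, q, hq, hpq⟩ := Submodule.mem_sup.1 hxmspan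
    obtain ⟨a, ha⟩ := (Submodule.mem_span_range_iff_exists_fun ℂ).1 hp
    obtain ⟨b, hb⟩ := (Submodule.mem_span_range_iff_exists_fun ℂ).1 hq
    have hxmexp : fc (-1) = (∑ i, a i • u i) + ∑ i, b i • v i := by
      rw [ha, hb]; exact hpq.symm
    have hquv : ∀ (j : Fin s) (i : Fin r), χ (bk (u j) (v i)) = 0 := fun j i =>
      hχg1 _ (hbk01 _ (hu j).2 _ (hv i).2)
    have hqvu : ∀ (j : Fin r) (i : Fin s), χ (bk (v j) (u i)) = 0 := fun j i =>
      hχg1 _ (hbk10 _ (hv j).2 _ (hu i).2)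
    have hneg21 : (-2 - (-1) : ℤ) = -1 := by norm_num
    have hupart : ∀ j : Fin s, χ (bk (u j) (fc (-1))) = 0 := by
      intro j
      have hn : u j ∈ n0 := by
        rw [hn0]
        exact Submodule.mem_sup_right (Submodule.subset_span (Or.inl ⟨j, rfl⟩))
      have h0 := hC (u j) hn
      rw [hiso (u j) (-1) (hu j).1, hneg21] at h0
      exact h0
    have hvpart : ∀ j : Fin r, j ≠ mid → χ (bk (v j) (fc (-1))) = 0 := by
      intro j hj
      have hn : v j ∈ n0 := by
        rw [hn0]
        exact Submodule.mem_sup_right (Submodule.subset_span (Or.inr ⟨j, hj, rfl⟩))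
      have h0 := hC (v j) hn
      rw [hiso (v j) (-1) (hv j).1, hneg21] at h0
      exact h0
    -- the u-coefficients vanish
    have hacoef : ∀ i : Fin s, a i = 0 := by
      intro i
      have hjlt : s - 1 - (i : ℕ) < s := by have := i.isLt; omega
      set j : Fin s := ⟨s - 1 - (i : ℕ), hjlt⟩ with hjdef
      have h0 := hupart j
      rw [hxmexp, map_add, map_add] at h0
      have e1 : χ (bk (u j) (∑ i, b i • v i)) = 0 := by
        rw [map_sum, map_sum]
        refine Finset.sum_eq_zero ?_
        intro bb _
        rw [map_smul, map_smul, hquv j bb, smul_zero]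
      have e2 : χ (bk (u j) (∑ i, a i • u i)) = a i * (if ((j : ℕ)) + 1 ≤ s / 2 then (-1 : ℂ) else 1) := by
        rw [map_sum, map_sum]
        rw [Finset.sum_eq_single i]
        · rw [map_smul, map_smul, hχu j i, smul_eq_mul]
          have hcond : (j : ℕ) + (i : ℕ) + 2 = s + 1 := by
            have := i.isLt; simp only [hjdef]; omega
          rw [if_pos hcond]
        · intro bb _ hbb
          rw [map_smul, map_smul, hχu j bb, smul_eq_mul]
          have hcond : ¬((j : ℕ) + (bb : ℕ) + 2 = s + 1) := by
            intro h
            apply hbb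
            apply Fin.ext
            have hi := i.isLt; have hbb' := bb.isLt
            simp only [hjdef] at h; omega
          rw [if_neg hcond, mul_zero]
        · intro h; exact absurd (Finset.mem_univ i) h
      rw [e1, e2, add_zero] at h0
      rcases mul_eq_zero.1 h0 with h | h
      · exact h
      · by_cases hhalf : (j : ℕ) + 1 ≤ s / 2
        · rw [if_pos hhalf] at h; norm_num at h
        · rw [if_neg hhalf] at h; norm_num at h
    -- the v-coefficients off mid vanish
    have hbcoef : ∀ i : Fin r, i ≠ mid → b i = 0 := by
      intro i hi
      have hjlt : r - 1 - (i : ℕ) < r := by have := i.isLt; omega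
      set j : Fin r := ⟨r - 1 - (i : ℕ), hjlt⟩ with hjdef
      have hjmid : j ≠ mid := by
        intro h
        apply hi
        apply Fin.ext
        have h' : (j : ℕ) = (mid : ℕ) := by rw [h]
        have := i.isLt
        simp only [hjdef] at h'; omega
      have h0 := hvpart j hjmid
      rw [hxmexp, map_add, map_add] at h0
      have e1 : χ (bk (v j) (∑ i, a i • u i)) = 0 := by
        rw [map_sum, map_sum]
        refine Finset.sum_eq_zero ?_
        intro bb _
        rw [map_smul, map_smul, hqvu j bb, smul_zero]
      have e2 : χ (bk (v j) (∑ i, b i • v i)) = b i := by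
        rw [map_sum, map_sum]
        rw [Finset.sum_eq_single i]
        · rw [map_smul, map_smul, hχv j i, smul_eq_mul]
          have hcond : (j : ℕ) + (i : ℕ) + 2 = r + 1 := by
            have := i.isLt; simp only [hjdef]; omega
          rw [if_pos hcond, mul_one]
        · intro bb _ hbb
          rw [map_smul, map_smul, hχv j bb, smul_eq_mul]
          have hcond : ¬((j : ℕ) + (bb : ℕ) + 2 = r + 1) := by
            intro h
            apply hbb
            apply Fin.ext
            have hi' := i.isLt; have hbb' := bb.isLt
            simp only [hjdef] at h; omega
          rw [if_neg hcond, mul_zero]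
        · intro h; exact absurd (Finset.mem_univ i) h
      rw [e1, e2, zero_add] at h0
      exact h0
    -- hence the (-1)-component is a multiple of v mid
    have hxmval : fc (-1) = b mid • v mid := by
      rw [hxmexp]
      have h1 : (∑ i, a i • u i) = 0 :=
        Finset.sum_eq_zero fun i _ => by rw [hacoef i, zero_smul]
      have h2 : (∑ i, b i • v i) = b mid • v mid := by
        refine Finset.sum_eq_single mid ?_ ?_
        · intro bb _ hbb; rw [hbcoef bb hbb, zero_smul]
        · intro h; exact absurd (Finset.mem_univ mid) h
      rw [h1, h2, zero_add]
    -- assemble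
    have hkerpart : bk e (x - fc (-1)) = 0 := by
      have hsum : bk e x = bk e (fc (-1)) := by
        conv_lhs => rw [← hxsum]
        rw [Finsupp.sum, map_sum]
        refine Finset.sum_eq_single (-1 : ℤ) ?_ ?_
        · intro bb hbb hne
          by_cases hbb0 : 0 ≤ bb
          · exact hek bb hbb0
          · rw [hflow bb (by omega), map_zero]
        · intro hns
          rw [Finsupp.notMem_support_iff.1 hns, map_zero]
      rw [map_sub, hsum, sub_self]
    refine Submodule.mem_sup.2 ⟨x - fc (-1), ?_, fc (-1), ?_, by abel⟩
    · exact LinearMap.mem_ker.2 hkerpart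
    · exact Submodule.mem_span_singleton.2 ⟨b mid, hxmval.symm⟩
  · -- backward direction
    intro hxk y hy
    obtain ⟨k, hk, w, hw, rfl⟩ := Submodule.mem_sup.1 hxk
    obtain ⟨c, rfl⟩ := Submodule.mem_span_singleton.1 hw
    have h1 : χ (bk y k) = 0 := by
      rw [hχbk]; exact hker k (LinearMap.mem_ker.1 hk) y
    have h2 : χ (bk y (v mid)) = 0 := by
      have hle : n0 ≤ LinearMap.ker (χ ∘ₗ (bk.flip (v mid))) := by
        rw [hn0]
        apply sup_le
        · refine iSup_le fun i => iSup_le fun hi => ?_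
          intro z hz
          rw [LinearMap.mem_ker, LinearMap.comp_apply, LinearMap.flip_apply]
          refine hχeig _ ((i : ℂ) + (-1 : ℤ))
            (heig z (v mid) _ _ (hgrad i z hz) (hgrad (-1) _ (hv mid).1)) ?_
          have hne : i + (-1) ≠ -2 := by omega
          intro hh
          exact hne (by exact_mod_cast (show ((i : ℂ) + ((-1 : ℤ) : ℂ)) = ((-2 : ℤ) : ℂ) by
            push_cast; push_cast at hh; linear_combination hh))
        · rw [Submodule.span_le]
          rintro z (⟨j, rfl⟩ | ⟨j, hj, rfl⟩)
          · have : χ (bk (u j) (v mid)) = 0 :=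
              hχg1 _ (hbk01 _ (hu j).2 _ (hv mid).2)
            simpa [LinearMap.mem_ker] using this
          · have : χ (bk (v j) (v mid)) = 0 := by
              rw [hχv j mid]
              rw [if_neg]
              intro hcond
              apply hj
              apply Fin.ext
              have := j.isLt
              omega
            simpa [LinearMap.mem_ker] using this
      have := hle hy
      rw [LinearMap.mem_ker, LinearMap.comp_apply, LinearMap.flip_apply] at this
      exact this
    simp only [map_add, map_smul, h1, h2, smul_zero, smul_eq_mul, mul_zero, add_zero, zero_add]
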